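/- arXiv:1611.01562 — 3 statements merged into one kernel-verified Lean document; each statement's English description precedes it below -/
import Mathlib

section
/- Let R be a ring and n ≥ 1. If R is n-skew-Armendariz, then A_n is Abelian: every idempotent of A_n is central in A_n. -/
/-!
Applying the hypothesis to `e (1 - e) = 0` and `(1 - e) e = 0` shows that an idempotent `e` of
`R[G]` is a constant `e₀`, itself idempotent. For an idempotent `u` of `R`, any `a : R` and
`c = u a (1 - u)`, one has `(u - c X^t) (1 - u + c X^t) = 0` for every `t ≠ 0`, so the hypothesis
gives `c = u c = 0`. Applied to `u` and to `1 - u` this yields `u a = u a u = a u`: idempotents of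
`R` are central, hence so is the constant `e` in `R[G]`.
-/

open scoped AddMonoidAlgebra

namespace AddMonoidAlgebra

lemma coeff_one_of_ne_zero {R G : Type*} [Semiring R] [AddMonoid G] {m : G} (hm : m ≠ 0) :
    (1 : R[G]).coeff m = 0 := by
  simp [one_def, coeff_single, Ne.symm hm]

/-- The skew-Armendariz condition of the skew PBW extension `R[G]` with trivial endomorphisms
and derivations. -/
def IsSkewArmendariz (R G : Type*) [Ring R] [AddMonoid G] : Prop :=
  ∀ f g : R[G], f * g = 0 → ∀ m, f.coeff 0 * g.coeff m = 0

namespace IsSkewArmendariz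

variable {R G : Type*} [Ring R] [AddMonoid G] (hR : IsSkewArmendariz R G)
include hR

lemma eq_single_zero_of_isIdempotentElem {e : R[G]} (he : IsIdempotentElem e) :
    e = single 0 (e.coeff 0) := by
  ext m
  by_cases hm : m = 0
  · simp [hm, coeff_single]
  have hleft : e.coeff 0 * e.coeff m = 0 := by
    simpa [coeff_sub, coeff_one_of_ne_zero hm] using hR e (1 - e) he.mul_one_sub_self m
  have hright : (1 - e.coeff 0) * e.coeff m = 0 := by
    simpa [coeff_sub, one_def, coeff_single] using hR (1 - e) e he.one_sub_mul_self m
  rw [sub_mul, one_mul, hleft, sub_zero] at hright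
  simp [hright, coeff_single, Ne.symm hm]

lemma isIdempotentElem_coeff_zero {e : R[G]} (he : IsIdempotentElem e) :
    IsIdempotentElem (e.coeff 0) := by
  have he' := he.eq
  rwa [hR.eq_single_zero_of_isIdempotentElem he, single_mul_single, zero_add,
    single_right_inj] at he'

lemma mul_mul_one_sub_eq_zero {t : G} (ht : t ≠ 0) {u : R} (hu : IsIdempotentElem u) (a : R) :
    u * a * (1 - u) = 0 := by
  set c := u * a * (1 - u)
  have huc : u * c = c := by simp only [c, ← mul_assoc, hu.eq]
  have hcu : c * (1 - u) = c := by simp only [c, mul_assoc, hu.one_sub.eq]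
  have hcc : c * c = 0 := by
    calc c * c = u * a * ((1 - u) * u) * (a * (1 - u)) := by simp only [c, mul_assoc]
      _ = 0 := by rw [hu.one_sub_mul_self, mul_zero, zero_mul]
  have hprod : (single 0 u - single t c) * (single 0 (1 - u) + single t c) = 0 := by
    simp only [sub_mul, mul_add, single_mul_single, zero_add, add_zero, hu.mul_one_sub_self,
      huc, hcu, hcc, single_zero]
    abel
  simpa [coeff_sub, coeff_add, coeff_single, Finsupp.single_apply, ht, Ne.symm ht, huc]
    using hR _ _ hprod t

lemma ring_commute_of_isIdempotentElem [Nontrivial G] {u : R} (hu : IsIdempotentElem u)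
    (a : R) : Commute u a := by
  obtain ⟨t, ht⟩ := exists_ne (0 : G)
  have hua := hR.mul_mul_one_sub_eq_zero ht hu a
  have hau : (1 - u) * a * u = 0 := by
    simpa using hR.mul_mul_one_sub_eq_zero ht hu.one_sub a
  rw [mul_sub, mul_one, sub_eq_zero] at hua
  rw [sub_mul, one_mul, sub_mul, sub_eq_zero] at hau
  exact hua.trans hau.symm

lemma commute_of_isIdempotentElem [Nontrivial G] {e : R[G]} (he : IsIdempotentElem e)
    (f : R[G]) : Commute e f := by
  rw [hR.eq_single_zero_of_isIdempotentElem he]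
  exact single_commute (fun _ ↦ .zero_left _)
    (hR.ring_commute_of_isIdempotentElem (hR.isIdempotentElem_coeff_zero he)) f

end IsSkewArmendariz

end AddMonoidAlgebra

/-- If `R` is `n`-skew-Armendariz (`n ≥ 1`), then
`A_n = AddMonoidAlgebra R (Fin n →₀ ℕ)` is Abelian: every idempotent of `A_n` is
central in `A_n`. -/
theorem addMonoidAlgebra_abelian_of_nSkewArmendariz (R : Type*) [Ring R] (n : ℕ)
    (hn : 1 ≤ n)
    (hSA : ∀ f g : AddMonoidAlgebra R (Fin n →₀ ℕ), f * g = 0 →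
      ∀ m : Fin n →₀ ℕ, f.coeff 0 * g.coeff m = 0) :
    ∀ e : AddMonoidAlgebra R (Fin n →₀ ℕ), e * e = e →
      ∀ f : AddMonoidAlgebra R (Fin n →₀ ℕ), e * f = f * e := by
  have : Nonempty (Fin n) := ⟨⟨0, hn⟩⟩
  exact fun e he f ↦ (AddMonoidAlgebra.IsSkewArmendariz.commute_of_isIdempotentElem hSA he f).eq
end

section
/- Let R be a skew-Armendariz ring. Then R is a quasi-Baer ring with the IFP if and only if the polynomial ring Polynomial R is a quasi-Baer ring with the IFP. -/
open Polynomial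

/-- The weak skew-Armendariz hypothesis implies the full Armendariz property. -/
lemma arm_aux {R : Type*} [Ring R]
    (hSA : ∀ f g : Polynomial R, f * g = 0 → ∀ j : ℕ, f.coeff 0 * g.coeff j = 0) :
    ∀ (i : ℕ) (f g : Polynomial R), f * g = 0 → ∀ j : ℕ, f.coeff i * g.coeff j = 0 := by
  intro i
  induction i with
  | zero => exact fun f g h j => hSA f g h j
  | succ i ih =>
    intro f g h j
    have h0 : C (f.coeff 0) * g = 0 := by
      ext n
      rw [coeff_C_mul, coeff_zero]
      exact hSA f g h n
    have hfx : (X : Polynomial R) * (f.divX * g) = 0 := by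
      have hX := X_mul_divX_add f
      calc (X : Polynomial R) * (f.divX * g)
          = (X * f.divX + C (f.coeff 0)) * g - C (f.coeff 0) * g := by
            rw [add_mul, mul_assoc, add_sub_cancel_right]
        _ = 0 := by rw [hX, h, h0, sub_zero]
    have hdiv : f.divX * g = 0 := by
      ext n
      have := congrArg (fun p => Polynomial.coeff p (n + 1)) hfx
      simpa [coeff_X_mul] using this
    have := ih f.divX g hdiv j
    rwa [coeff_divX] at this

/-- A ring `T` is quasi-Baer if the right annihilator of every two-sided ideal of `T`
equals `eT` for some idempotent `e ∈ T`. -/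
def IsQuasiBaer (T : Type*) [Ring T] : Prop :=
  ∀ I : TwoSidedIdeal T, ∃ e : T, e * e = e ∧
    {x : T | ∀ a ∈ I, a * x = 0} = {x : T | e * x = x}

/-- A ring `T` has the insertion of factors property (IFP) if `a * b = 0` implies
`a * r * b = 0` for all `r ∈ T`. -/
def HasIFP (T : Type*) [Ring T] : Prop :=
  ∀ a b : T, a * b = 0 → ∀ r : T, a * r * b = 0

/-- If `R` is skew-Armendariz, then `R` is a quasi-Baer ring with the IFP
iff `Polynomial R` is a quasi-Baer ring with the IFP. -/
theorem isQuasiBaer_ifp_iff_polynomial_of_skewArmendariz (R : Type*) [Ring R]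
    (hSA : ∀ f g : Polynomial R, f * g = 0 → ∀ j : ℕ, f.coeff 0 * g.coeff j = 0) :
    (IsQuasiBaer R ∧ HasIFP R) ↔ (IsQuasiBaer (Polynomial R) ∧ HasIFP (Polynomial R)) := by
  have arm := arm_aux hSA
  constructor
  · rintro ⟨hQB, hIFP⟩
    have hIFPx : HasIFP (Polynomial R) := by
      intro f g hfg h
      ext n
      rw [coeff_zero, coeff_mul]
      refine Finset.sum_eq_zero fun p hp => ?_
      rw [coeff_mul, Finset.sum_mul]
      refine Finset.sum_eq_zero fun q hq => ?_
      exact hIFP _ _ (arm q.1 f g hfg p.2) (h.coeff q.2)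
    refine ⟨?_, hIFPx⟩
    intro J
    set S : Set R :=
      {a | ∀ x : R, (∀ f ∈ J, ∀ n r, f.coeff n * r * x = 0) → a * x = 0} with hS
    set I : TwoSidedIdeal R := TwoSidedIdeal.mk' S
      (fun x _ => zero_mul x)
      (fun {a b} ha hb x hx => by rw [add_mul, ha x hx, hb x hx, add_zero])
      (fun {a} ha x hx => by rw [neg_mul, ha x hx, neg_zero])
      (fun {r a} ha x hx => by rw [mul_assoc, ha x hx, mul_zero])
      (fun {a s} ha x hx => by
        rw [mul_assoc]
        exact ha (s * x) fun f hf n r => by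
          rw [← mul_assoc, mul_assoc _ r s]
          exact hx f hf n (r * s)) with hI
    obtain ⟨e, he, hre⟩ := hQB I
    refine ⟨C e, by rw [← C_mul, he], ?_⟩
    ext g
    simp only [Set.mem_setOf_eq]
    constructor
    · intro hg
      have key : ∀ n, e * g.coeff n = g.coeff n := by
        intro n
        have : g.coeff n ∈ {x : R | ∀ a ∈ I, a * x = 0} := by
          intro a haI
          rw [hI, TwoSidedIdeal.mem_mk'] at haI
          exact haI (g.coeff n) fun f hf m r => hIFP _ _ (arm m f g (hg f hf) n) r
        rw [hre] at this
        exact this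
      ext n
      rw [coeff_C_mul]
      exact key n
    · intro hg f hf
      have hcoef : ∀ n, f.coeff n ∈ I := by
        intro n
        rw [hI, TwoSidedIdeal.mem_mk']
        intro x hx
        have := hx f hf n 1
        rwa [mul_one] at this
      have heann : ∀ a ∈ I, a * e = 0 := by
        intro a ha
        have : e ∈ {x : R | ∀ a ∈ I, a * x = 0} := by rw [hre]; exact he
        exact this a ha
      have hge : ∀ j, g.coeff j = e * g.coeff j := by
        intro j
        conv_lhs => rw [← hg]
        rw [coeff_C_mul]
      ext n
      rw [coeff_zero, coeff_mul]
      refine Finset.sum_eq_zero fun p _ => ?_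
      rw [hge p.2, ← mul_assoc, heann _ (hcoef p.1), zero_mul]
  · rintro ⟨hQB, hIFP⟩
    have hIFPR : HasIFP R := by
      intro a b hab r
      have h0 : (C a : Polynomial R) * C b = 0 := by rw [← C_mul, hab, C_0]
      have := hIFP _ _ h0 (C r)
      rw [← C_mul, ← C_mul] at this
      exact C_eq_zero.mp this
    refine ⟨?_, hIFPR⟩
    intro I
    set J : TwoSidedIdeal (Polynomial R) := TwoSidedIdeal.mk'
      {f : Polynomial R | ∀ n, f.coeff n ∈ I}
      (fun n => by rw [coeff_zero]; exact I.zero_mem)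
      (fun {a b} ha hb n => by rw [coeff_add]; exact I.add_mem (ha n) (hb n))
      (fun {a} ha n => by rw [coeff_neg]; exact I.neg_mem (ha n))
      (fun {p f} hf n => by
        rw [coeff_mul]
        exact sum_mem fun q _ => I.mul_mem_left _ _ (hf q.2))
      (fun {f p} hf n => by
        rw [coeff_mul]
        exact sum_mem fun q _ => I.mul_mem_right _ _ (hf q.1)) with hJ
    obtain ⟨e, he, hre⟩ := hQB J
    have h1 : e * (1 - e) = 0 := by rw [mul_sub, mul_one, he, sub_self]
    have h2 : (1 - e) * e = 0 := by rw [sub_mul, one_mul, he, sub_self]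
    have hee : e.coeff 0 * e.coeff 0 = e.coeff 0 := by
      have h := arm 0 e (1 - e) h1 0
      simp [coeff_sub, coeff_one, mul_sub, sub_eq_zero] at h
      exact h.symm
    refine ⟨e.coeff 0, hee, ?_⟩
    ext x
    simp only [Set.mem_setOf_eq]
    constructor
    · intro hx
      have hmem : (C x : Polynomial R) ∈ {g : Polynomial R | ∀ f ∈ J, f * g = 0} := by
        intro f hf
        rw [hJ, TwoSidedIdeal.mem_mk'] at hf
        ext n
        rw [coeff_zero, coeff_mul_C]
        exact hx _ (hf n)
      rw [hre] at hmem
      have := congrArg (fun p => Polynomial.coeff p 0) hmem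
      simpa [coeff_mul_C] using this
    · intro hx a ha
      have hCa : (C a : Polynomial R) ∈ J := by
        rw [hJ, TwoSidedIdeal.mem_mk']
        intro n
        rw [coeff_C]
        split
        · exact ha
        · exact I.zero_mem
      have heJ : e ∈ {g : Polynomial R | ∀ f ∈ J, f * g = 0} := by rw [hre]; exact he
      have hCae : (C a : Polynomial R) * e = 0 := heJ (C a) hCa
      have hae0 : a * e.coeff 0 = 0 := by
        have := congrArg (fun p => Polynomial.coeff p 0) hCae
        simpa [coeff_C_mul] using this
      rw [← hx, ← mul_assoc, hae0, zero_mul]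
end

section
/- Let R be a skew-Armendariz ring. Then R is a right p.q.-Baer ring with the IFP if and only if the polynomial ring Polynomial R is a right p.q.-Baer ring with the IFP. -/
/-!
Skew-Armendariz already gives the full Armendariz condition: writing
`f = divX f * X + C (f.coeff 0)`, the hypothesis kills `C (f.coeff 0) * g`, and as `X` is regular,
`divX f * g = 0`; induct. Over an Armendariz ring, `f * R[X] * g = 0` iff
`f.coeff i * R * g.coeff j = 0` for all `i, j`. So the right annihilator of `f * R[X]` is generated
by `C e`, where the idempotent `e` generates the intersection of the finitely many (two-sided)
right annihilators of the `f.coeff i * R`, and IFP lifts coefficientwise. Conversely, IFP descends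
along `C`, and the constant coefficient of an idempotent generating the right annihilator of
`C a * R[X]` generates that of `a * R`.
-/

/-- A ring `T` is right p.q.-Baer if for every `a ∈ T` the right annihilator of the
principal right ideal `aT` equals `eT` for some idempotent `e ∈ T`. -/
def IsRightPQBaer (T : Type*) [Ring T] : Prop :=
  ∀ a : T, ∃ e : T, e * e = e ∧
    {x : T | ∀ r : T, a * r * x = 0} = {x : T | e * x = x}

open Polynomial

def IsArmendariz (R : Type*) [Ring R] : Prop :=
  ∀ f g : R[X], f * g = 0 → ∀ i j : ℕ, f.coeff i * g.coeff j = 0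

section

variable {R : Type*} [Ring R]

theorem isArmendariz_of_coeff_zero_mul_coeff_eq_zero
    (hSA : ∀ f g : R[X], f * g = 0 → ∀ j : ℕ, f.coeff 0 * g.coeff j = 0) :
    IsArmendariz R := by
  intro f g hfg i
  induction i generalizing f with
  | zero => exact hSA f g hfg
  | succ i ih =>
    have hC : C (f.coeff 0) * g = 0 := by
      ext n
      simp [coeff_C_mul, hSA f g hfg n]
    have hX : X * (f.divX * g) = 0 := calc
      X * (f.divX * g) = (f.divX * X + C (f.coeff 0)) * g := by
        rw [add_mul, hC, add_zero, ← mul_assoc, X_mul]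
      _ = 0 := by rw [divX_mul_X_add, hfg]
    simpa only [coeff_divX] using ih f.divX (isRegular_X.left.mul_left_eq_zero_iff.mp hX)

theorem Polynomial.mul_mul_eq_zero_of_coeff {f g : R[X]}
    (H : ∀ i j : ℕ, ∀ r : R, f.coeff i * r * g.coeff j = 0) (h : R[X]) : f * h * g = 0 := by
  ext n
  simp only [coeff_mul, Finset.sum_mul, coeff_zero]
  exact Finset.sum_eq_zero fun p _ => Finset.sum_eq_zero fun q _ => H _ _ _

theorem IsArmendariz.forall_mul_mul_eq_zero_iff (hA : IsArmendariz R) {f g : R[X]} :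
    (∀ h : R[X], f * h * g = 0) ↔ ∀ i j : ℕ, ∀ r : R, f.coeff i * r * g.coeff j = 0 := by
  refine ⟨fun H i j r => ?_, mul_mul_eq_zero_of_coeff⟩
  have := hA f (C r * g) (by rw [← mul_assoc, H]) i j
  rwa [coeff_C_mul, ← mul_assoc] at this

theorem Polynomial.C_mul_eq_self_iff {e : R} {g : R[X]} :
    C e * g = g ↔ ∀ j : ℕ, e * g.coeff j = g.coeff j := by
  simp only [Polynomial.ext_iff, coeff_C_mul]

theorem mul_mul_eq_self_iff_of_isIdempotentElem {e f : R} (he : IsIdempotentElem e)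
    (hfef : f * (e * f) = e * f) (x : R) : e * f * x = x ↔ e * x = x ∧ f * x = x := by
  constructor
  · intro hx
    constructor
    · rw [← hx, ← mul_assoc, ← mul_assoc, he.eq]
    · rw [← hx, ← mul_assoc, hfef]
  · rintro ⟨hex, hfx⟩
    rw [mul_assoc, hfx, hex]

theorem IsRightPQBaer.exists_isIdempotentElem_forall_mem (hR : IsRightPQBaer R) (s : Finset R) :
    ∃ e : R, IsIdempotentElem e ∧
      ∀ x : R, e * x = x ↔ ∀ a ∈ s, ∀ r : R, a * r * x = 0 := by
  classical
  induction s using Finset.induction_on with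
  | empty => exact ⟨1, IsIdempotentElem.one, by simp⟩
  | insert a s _ ih =>
    obtain ⟨e, he, hes⟩ := ih
    obtain ⟨f, hf, hfS⟩ := hR a
    have hfa (x : R) : f * x = x ↔ ∀ r : R, a * r * x = 0 := (Set.ext_iff.mp hfS x).symm
    have hfef : f * (e * f) = e * f :=
      (hfa _).mpr fun r => by rw [← mul_assoc, mul_assoc a, (hfa f).mp hf]
    have hmul := mul_mul_eq_self_iff_of_isIdempotentElem he hfef
    refine ⟨e * f, (hmul _).mpr ⟨by rw [← mul_assoc, he.eq], hfef⟩, fun x => ?_⟩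
    rw [hmul, hes, hfa, Finset.forall_mem_insert, and_comm]

theorem IsRightPQBaer.exists_isIdempotentElem_forall_coeff (hR : IsRightPQBaer R) (f : R[X]) :
    ∃ e : R, IsIdempotentElem e ∧
      ∀ x : R, e * x = x ↔ ∀ i : ℕ, ∀ r : R, f.coeff i * r * x = 0 := by
  obtain ⟨e, he, hes⟩ := hR.exists_isIdempotentElem_forall_mem f.coeffs
  refine ⟨e, he, fun x => (hes x).trans ⟨fun H i r => ?_, fun H a ha r => ?_⟩⟩
  · by_cases hi : f.coeff i = 0
    · rw [hi, zero_mul, zero_mul]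
    · exact H _ (coeff_mem_coeffs hi) r
  · obtain ⟨i, -, rfl⟩ := mem_coeffs_iff.mp ha
    exact H i r

theorem IsRightPQBaer.polynomial (hR : IsRightPQBaer R) (hA : IsArmendariz R) :
    IsRightPQBaer R[X] := by
  intro f
  obtain ⟨e, he, hes⟩ := hR.exists_isIdempotentElem_forall_coeff f
  refine ⟨C e, by rw [← C_mul, he.eq], Set.ext fun g => ?_⟩
  show (∀ h, f * h * g = 0) ↔ C e * g = g
  simp only [hA.forall_mul_mul_eq_zero_iff, C_mul_eq_self_iff, hes]
  exact forall_comm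

theorem HasIFP.polynomial (hR : HasIFP R) (hA : IsArmendariz R) : HasIFP R[X] :=
  fun _ _ hfg => mul_mul_eq_zero_of_coeff fun i j r => hR _ _ (hA _ _ hfg i j) r

theorem IsRightPQBaer.of_polynomial (hR : IsRightPQBaer R[X]) : IsRightPQBaer R := by
  intro a
  obtain ⟨E, hE, hES⟩ := hR (C a)
  have hEa (g : R[X]) : E * g = g ↔ ∀ h : R[X], C a * h * g = 0 := (Set.ext_iff.mp hES g).symm
  refine ⟨E.coeff 0, by rw [← mul_coeff_zero, hE], Set.ext fun x =>
    ⟨fun hx => ?_, fun (hx : E.coeff 0 * x = x) r => ?_⟩⟩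
  · have hCx : E * C x = C x := (hEa _).mpr fun h => by
      ext n
      rw [coeff_mul_C, coeff_C_mul, hx, coeff_zero]
    show E.coeff 0 * x = x
    simpa only [coeff_mul_C, coeff_C_zero] using congrArg (coeff · 0) hCx
  · have hEr := congrArg (coeff · 0) ((hEa E).mp hE (C r))
    simp only [mul_coeff_zero, coeff_C_zero, coeff_zero] at hEr
    rw [← hx, ← mul_assoc, hEr, zero_mul]

theorem HasIFP.of_injective {S : Type*} [Ring S] (φ : R →+* S) (hφ : Function.Injective φ)
    (hS : HasIFP S) : HasIFP R := fun a b hab r =>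
  hφ <| by rw [map_mul, map_mul, map_zero, hS _ _ (by rw [← map_mul, hab, map_zero])]

end

/-- If `R` is skew-Armendariz, then `R` is a right p.q.-Baer ring with
the IFP iff `Polynomial R` is a right p.q.-Baer ring with the IFP. -/
theorem isRightPQBaer_ifp_iff_polynomial_of_skewArmendariz (R : Type*) [Ring R]
    (hSA : ∀ f g : Polynomial R, f * g = 0 → ∀ j : ℕ, f.coeff 0 * g.coeff j = 0) :
    (IsRightPQBaer R ∧ HasIFP R) ↔
      (IsRightPQBaer (Polynomial R) ∧ HasIFP (Polynomial R)) := by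
  have hA := isArmendariz_of_coeff_zero_mul_coeff_eq_zero hSA
  exact ⟨fun ⟨hPQ, hIFP⟩ => ⟨hPQ.polynomial hA, hIFP.polynomial hA⟩,
    fun ⟨hPQ, hIFP⟩ => ⟨hPQ.of_polynomial, hIFP.of_injective C C_injective⟩⟩
end
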